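/- For p, q ∈ [0,1], the squared Hellinger distance between Bernoulli(p) and Bernoulli(q), D²(p,q) := (1/2)(√p − √q)² + (1/2)(√(1−p) − √(1−q))², satisfies D²(p,q) ≥ (p−q)²/4 · 1/((p+q) ∧ (2−p−q)). -/
import Mathlib

lemma sqrt_diff_sq_lower (a b : ℝ) (ha : 0 ≤ a) (hb : 0 ≤ b) (hab : 0 < a + b) :
    (Real.sqrt a - Real.sqrt b)^2 ≥ (a - b)^2 / (2*(a+b)) := by
  have hsa := Real.sq_sqrt ha
  have hsb := Real.sq_sqrt hb
  have h2ab : 2 * (Real.sqrt a * Real.sqrt b) ≤ a + b := by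
    nlinarith [sq_nonneg (Real.sqrt a - Real.sqrt b)]
  have hsum : (Real.sqrt a + Real.sqrt b)^2 ≤ 2*(a+b) := by nlinarith
  have heq : (a - b)^2 = (Real.sqrt a - Real.sqrt b)^2 * (Real.sqrt a + Real.sqrt b)^2 := by
    nlinarith
  rw [ge_iff_le, div_le_iff₀ (by linarith)]
  nlinarith [sq_nonneg (Real.sqrt a - Real.sqrt b)]

theorem hellinger_sq_lower_bound (p q : ℝ) (hp : p ∈ Set.Icc (0:ℝ) 1)
    (hq : q ∈ Set.Icc (0:ℝ) 1) (h0 : 0 < p + q) (h2 : p + q < 2) :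
    (1/2) * (Real.sqrt p - Real.sqrt q)^2
      + (1/2) * (Real.sqrt (1 - p) - Real.sqrt (1 - q))^2
      ≥ (p - q)^2 / 4 * (1 / min (p + q) (2 - p - q)) := by
  obtain ⟨hp0, hp1⟩ := hp
  obtain ⟨hq0, hq1⟩ := hq
  have h1 := sqrt_diff_sq_lower p q hp0 hq0 h0
  have h2' := sqrt_diff_sq_lower (1-p) (1-q) (by linarith) (by linarith) (by linarith)
  have hnn1 : (0:ℝ) ≤ (Real.sqrt p - Real.sqrt q)^2 := sq_nonneg _
  have hnn2 : (0:ℝ) ≤ (Real.sqrt (1-p) - Real.sqrt (1-q))^2 := sq_nonneg _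
  rcases min_cases (p+q) (2-p-q) with ⟨hm, _⟩ | ⟨hm, _⟩ <;> rw [hm]
  · have : (p - q)^2 / 4 * (1 / (p+q)) = (p-q)^2 / (2*(p+q)) / 2 := by
      rw [mul_one_div, div_div, div_div]
      congr 1; ring
    rw [this]; linarith
  · have he : ((1-p) - (1-q))^2 = (p-q)^2 := by ring
    rw [he] at h2'
    have : (p - q)^2 / 4 * (1 / (2-p-q)) = (p-q)^2 / (2*((1-p)+(1-q))) / 2 := by
      rw [mul_one_div, div_div, div_div]
      congr 1; ring
    rw [this]; linarith
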